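/- (Explicit Bartlett bias bound under geometric decay.) Assume there are constants γ > 0 and ρ ∈ [0, 1) such that ‖R[k]‖₂ ≤ γρ^{|k|} for all k ∈ ℤ, and let M ≥ 1 be an integer. Then sup_{s∈[−1/2,1/2]} ‖Φ(s) − Σ_{k=−M+1}^{M−1} e^{−j2πsk} (1 − |k|/M) R[k]‖₂ ≤ 2γρ/((1 − ρ)² M) + 2γ (ρ²/(1 − ρ)² + 1/(1 − ρ)) ρ^{M}. -/

import Mathlib

/-- The spectral norm (largest singular value): the operator norm of a matrix
acting between Euclidean spaces. -/
noncomputable def spec2 {𝕜 m n : Type*} [RCLike 𝕜] [Fintype m] [Fintype n] [DecidableEq n]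
    (M : Matrix m n 𝕜) : ℝ :=
  letI := Matrix.instL2OpNormedAddCommGroup (𝕜 := 𝕜) (m := m) (n := n)
  ‖M‖

/-- The spectral density `Φ(s) = Σ_{k∈ℤ} e^{−j2πsk} R[k]`. -/
noncomputable def Phi {n : ℕ} (R : ℤ → Matrix (Fin n) (Fin n) ℝ) (s : ℝ) :
    Matrix (Fin n) (Fin n) ℂ :=
  ∑' k : ℤ,
    Complex.exp (-(2 * (Real.pi : ℂ) * (s : ℂ) * (k : ℂ)) * Complex.I) • (R k).map (↑· : ℝ → ℂ)

/-!
For the Bartlett estimate `Φ_M`, `Φ(s) − Φ_M(s) = Σₖ wₖ e^{−j2πsk} R[k]` with `wₖ = min (|k|/M) 1`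
(`wₖ = 1 − bartlettWindow M k`). Since `wₖ ≤ |k|/M` for every `k`, the bias is at most
`(γ/M) Σₖ |k| ρ^{|k|} = 2γρ/((1 − ρ)² M)`, the first summand of the bound.
The only matrix fact used is that complexifying a real matrix does not increase its spectral
norm, which follows by splitting a complex vector into real and imaginary parts.
-/

open scoped Matrix.Norms.L2Operator
open Matrix

theorem EuclideanSpace.norm_sq_eq_norm_sq_re_add_norm_sq_im {ι : Type*} [Fintype ι]
    (x : EuclideanSpace ℂ ι) :
    ‖x‖ ^ 2 = ‖WithLp.toLp 2 fun i => (x i).re‖ ^ 2 + ‖WithLp.toLp 2 fun i => (x i).im‖ ^ 2 := by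
  simp only [EuclideanSpace.norm_sq_eq, Complex.sq_norm, Complex.normSq_apply, Real.norm_eq_abs,
    sq_abs, ← Finset.sum_add_distrib, ← sq]

theorem Matrix.l2_opNorm_map_ofReal_le {m n : Type*} [Fintype m] [Fintype n] [DecidableEq n]
    (A : Matrix m n ℝ) : ‖A.map ((↑) : ℝ → ℂ)‖ ≤ ‖A‖ := by
  refine ContinuousLinearMap.opNorm_le_bound _ (norm_nonneg A) fun x => ?_
  set u : EuclideanSpace ℝ n := WithLp.toLp 2 fun j => (x j).re
  set v : EuclideanSpace ℝ n := WithLp.toLp 2 fun j => (x j).im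
  set y : EuclideanSpace ℂ m := WithLp.toLp 2 (A.map ((↑) : ℝ → ℂ) *ᵥ x)
  have hre : (WithLp.toLp 2 fun i => (y i).re) = WithLp.toLp 2 (A *ᵥ u) := by
    ext i; simp [y, u, Matrix.mulVec, dotProduct, Complex.re_sum]
  have him : (WithLp.toLp 2 fun i => (y i).im) = WithLp.toLp 2 (A *ᵥ v) := by
    ext i; simp [y, v, Matrix.mulVec, dotProduct, Complex.im_sum]
  have hu := pow_le_pow_left₀ (norm_nonneg _) (A.l2_opNorm_mulVec u) 2
  have hv := pow_le_pow_left₀ (norm_nonneg _) (A.l2_opNorm_mulVec v) 2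
  have hy : ‖y‖ ^ 2 ≤ (‖A‖ * ‖x‖) ^ 2 := by
    rw [EuclideanSpace.norm_sq_eq_norm_sq_re_add_norm_sq_im y, hre, him, mul_pow,
      EuclideanSpace.norm_sq_eq_norm_sq_re_add_norm_sq_im x, mul_add, ← mul_pow, ← mul_pow]
    exact add_le_add hu hv
  exact le_of_sq_le_sq hy (by positivity)

theorem HasSum.int_natAbs {G : Type*} [AddCommGroup G] [TopologicalSpace G]
    [IsTopologicalAddGroup G] {f : ℕ → G} {a : G} (hf : HasSum f a) :
    HasSum (fun k : ℤ => f k.natAbs) (a + a - f 0) := by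
  simpa using HasSum.of_nat_of_neg (f := fun k : ℤ => f k.natAbs) (by simpa using hf)
    (by simpa using hf)

theorem hasSum_natAbs_mul_pow_natAbs {ρ : ℝ} (hρ0 : 0 ≤ ρ) (hρ1 : ρ < 1) :
    HasSum (fun k : ℤ => (k.natAbs : ℝ) * ρ ^ k.natAbs) (2 * ρ / (1 - ρ) ^ 2) := by
  have h := (hasSum_coe_mul_geometric_of_norm_lt_one
    (by rwa [Real.norm_of_nonneg hρ0] : ‖ρ‖ < 1)).int_natAbs
  rwa [Nat.cast_zero, zero_mul, sub_zero, ← two_mul, ← mul_div_assoc] at h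

theorem summable_pow_natAbs {ρ : ℝ} (hρ0 : 0 ≤ ρ) (hρ1 : ρ < 1) :
    Summable fun k : ℤ => ρ ^ k.natAbs :=
  (hasSum_geometric_of_lt_one hρ0 hρ1).int_natAbs.summable

noncomputable def bartlettWindow (M : ℕ) (k : ℤ) : ℝ := max (1 - k.natAbs / M) 0

theorem bartlettWindow_of_mem {M : ℕ} {k : ℤ} (hk : k ∈ Finset.Icc (-(M : ℤ) + 1) (M - 1)) :
    bartlettWindow M k = 1 - k.natAbs / M := by
  have : (k.natAbs : ℝ) ≤ M := by rw [Finset.mem_Icc] at hk; exact_mod_cast (by omega : k.natAbs ≤ M)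
  exact max_eq_left (sub_nonneg.mpr (div_le_one_of_le₀ this (Nat.cast_nonneg M)))

theorem bartlettWindow_of_notMem {M : ℕ} (hM : 0 < M) {k : ℤ}
    (hk : k ∉ Finset.Icc (-(M : ℤ) + 1) (M - 1)) : bartlettWindow M k = 0 := by
  have : (M : ℝ) ≤ k.natAbs := by rw [Finset.mem_Icc] at hk; exact_mod_cast (by omega : M ≤ k.natAbs)
  exact max_eq_right (sub_nonpos.mpr ((one_le_div₀ (by positivity)).mpr this))

theorem abs_one_sub_bartlettWindow_le (M : ℕ) (k : ℤ) :
    |1 - bartlettWindow M k| ≤ k.natAbs / M := by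
  have h0 : (0 : ℝ) ≤ k.natAbs / M := by positivity
  rw [bartlettWindow, abs_le]
  constructor <;> cases max_cases (1 - (k.natAbs : ℝ) / M) 0 <;> linarith

theorem norm_tsum_sub_sum_bartlett_le {𝕜 E : Type*} [RCLike 𝕜] [NormedAddCommGroup E]
    [NormedSpace 𝕜 E] {a : ℤ → E} (ha : Summable a) {b : ℤ → ℝ} {B : ℝ} (hb : HasSum b B)
    (hab : ∀ k, k.natAbs * ‖a k‖ ≤ b k) {M : ℕ} (hM : 0 < M) :
    ‖∑' k, a k - ∑ k ∈ Finset.Icc (-(M : ℤ) + 1) (M - 1), ((1 - k.natAbs / M : ℝ) : 𝕜) • a k‖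
      ≤ B / M := by
  have hw : HasSum (fun k => (bartlettWindow M k : 𝕜) • a k)
      (∑ k ∈ Finset.Icc (-(M : ℤ) + 1) (M - 1), (bartlettWindow M k : 𝕜) • a k) :=
    hasSum_sum_of_ne_finset_zero fun k hk => by
      rw [bartlettWindow_of_notMem hM hk, RCLike.ofReal_zero, zero_smul]
  rw [Finset.sum_congr rfl fun k hk => by rw [bartlettWindow_of_mem hk]] at hw
  refine (ha.hasSum.sub hw).norm_le_of_bounded (hb.div_const M) fun k => ?_
  calc ‖a k - (bartlettWindow M k : 𝕜) • a k‖ = |1 - bartlettWindow M k| * ‖a k‖ := by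
        rw [← RCLike.norm_ofReal (K := 𝕜), ← norm_smul, RCLike.ofReal_sub, RCLike.ofReal_one,
          sub_smul, one_smul]
    _ ≤ k.natAbs / M * ‖a k‖ := by gcongr; exact abs_one_sub_bartlettWindow_le M k
    _ ≤ b k / M := by rw [div_mul_eq_mul_div]; gcongr; exact hab k

theorem bias_bartlett_geometric_general {n : ℕ}
    (R : ℤ → Matrix (Fin n) (Fin n) ℝ)
    (γ ρ : ℝ) (hγ : 0 < γ) (hρ0 : 0 ≤ ρ) (hρ1 : ρ < 1)
    (hdecay : ∀ k : ℤ, spec2 (R k) ≤ γ * ρ ^ k.natAbs)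
    (M : ℕ) (hM : 1 ≤ M) :
    ∀ s ∈ Set.Icc (-(1:ℝ)/2) (1/2),
      spec2 (Phi R s -
        ∑ k ∈ Finset.Icc (-(M : ℤ) + 1) ((M : ℤ) - 1),
          (((1 - (k.natAbs : ℝ) / M : ℝ) : ℂ) *
              Complex.exp (-(2 * (Real.pi : ℂ) * (s : ℂ) * (k : ℂ)) * Complex.I)) •
            (R k).map (↑· : ℝ → ℂ)) ≤
      2 * γ * ρ / ((1 - ρ) ^ 2 * M) +
        2 * γ * (ρ ^ 2 / (1 - ρ) ^ 2 + 1 / (1 - ρ)) * ρ ^ M := by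
  intro s _
  set a : ℤ → Matrix (Fin n) (Fin n) ℂ := fun k =>
    Complex.exp (-(2 * (Real.pi : ℂ) * (s : ℂ) * (k : ℂ)) * Complex.I) • (R k).map (↑· : ℝ → ℂ)
  have ha_le : ∀ k, ‖a k‖ ≤ γ * ρ ^ k.natAbs := fun k => by
    have hexp := Complex.norm_exp_ofReal_mul_I (-(2 * Real.pi * s * k))
    push_cast at hexp
    rw [norm_smul, hexp, one_mul]
    exact (R k).l2_opNorm_map_ofReal_le.trans (hdecay k)
  have ha : Summable a := ((summable_pow_natAbs hρ0 hρ1).mul_left γ).of_norm_bounded ha_le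
  have htail : 0 ≤ 2 * γ * (ρ ^ 2 / (1 - ρ) ^ 2 + 1 / (1 - ρ)) * ρ ^ M := by
    have := sub_pos.mpr hρ1
    positivity
  calc _ ≤ γ * (2 * ρ / (1 - ρ) ^ 2) / M := by
        simp_rw [mul_smul]
        refine norm_tsum_sub_sum_bartlett_le ha
          ((hasSum_natAbs_mul_pow_natAbs hρ0 hρ1).mul_left γ) (fun k => ?_) hM
        rw [mul_left_comm]
        exact mul_le_mul_of_nonneg_left (ha_le k) (Nat.cast_nonneg _)
    _ = 2 * γ * ρ / ((1 - ρ) ^ 2 * M) := by field_simp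
    _ ≤ _ := le_add_of_nonneg_right htail

theorem bias_bartlett_geometric {n : ℕ} (hn : 1 ≤ n)
    (R : ℤ → Matrix (Fin n) (Fin n) ℝ)
    (hsum : Summable fun k : ℤ => spec2 (R k))
    (γ ρ : ℝ) (hγ : 0 < γ) (hρ0 : 0 ≤ ρ) (hρ1 : ρ < 1)
    (hdecay : ∀ k : ℤ, spec2 (R k) ≤ γ * ρ ^ k.natAbs)
    (M : ℕ) (hM : 1 ≤ M) :
    ∀ s ∈ Set.Icc (-(1:ℝ)/2) (1/2),
      spec2 (Phi R s -
        ∑ k ∈ Finset.Icc (-(M : ℤ) + 1) ((M : ℤ) - 1),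
          (((1 - (k.natAbs : ℝ) / M : ℝ) : ℂ) *
              Complex.exp (-(2 * (Real.pi : ℂ) * (s : ℂ) * (k : ℂ)) * Complex.I)) •
            (R k).map (↑· : ℝ → ℂ)) ≤
      2 * γ * ρ / ((1 - ρ) ^ 2 * M) +
        2 * γ * (ρ ^ 2 / (1 - ρ) ^ 2 + 1 / (1 - ρ)) * ρ ^ M :=
  bias_bartlett_geometric_general R γ ρ hγ hρ0 hρ1 hdecay M hM
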